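/- arXiv:2008.07093 — 5 statements merged into one kernel-verified Lean document; each statement's English description precedes it below -/
import Mathlib

section
/- For any three probability measures μ₁, μ₂, μ₃ on a metric space, the square root of the variance satisfies the triangle inequality: √Var(μ₁,μ₃) ≤ √Var(μ₁,μ₂) + √Var(μ₂,μ₃). -/
/-!
For a probability measure `ν` let `r_ν(x) = ‖d(x, ·)‖_{L^p(ν)}` (`edistLp p ν`). Minkowski in `ν`
gives `r_ν(x) ≤ d(x, x') + r_ν(x')`, so `r_ν` is either identically `∞` or 1-Lipschitz; in both
cases it is continuous, which supplies all the measurability needed without any joint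
measurability of `d` on `X × X`. Taking the `L^p(μ₂)` norm in `x'` of that inequality yields
`r_{μ₃}(x) ≤ r_{μ₂}(x) + ‖r_{μ₃}‖_{L^p(μ₂)}`, and Minkowski in `μ₁` then gives the triangle
inequality for `(μ, ν) ↦ ‖r_ν‖_{L^p(μ)}`, which for `p = 2` is `√Var(μ, ν)`.
-/

open MeasureTheory

/-- The variance between two measures on a metric space:
`Var(μ,ν) := ∫∫ d²(x,y) dμ(x) dν(y)`, with values in `[0,∞]`. -/
noncomputable def pairVar {X : Type*} [MetricSpace X] [MeasurableSpace X]
    (μ ν : Measure X) : ENNReal :=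
  ∫⁻ x, ∫⁻ y, ENNReal.ofReal (dist x y ^ 2) ∂ν ∂μ

open scoped ENNReal

theorem eLpNorm_const_of_isProbabilityMeasure {α ε : Type*} [MeasurableSpace α] [ENorm ε]
    {μ : Measure α} [IsProbabilityMeasure μ] {p : ℝ≥0∞} (hp : p ≠ 0) (c : ε) :
    eLpNorm (fun _ : α => c) p μ = ‖c‖ₑ := by
  simp [eLpNorm_const _ hp (IsProbabilityMeasure.ne_zero μ)]

theorem eLpNorm_le_add_of_le {α : Type*} [MeasurableSpace α] {μ : Measure α} {p : ℝ≥0∞}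
    {f g h : α → ℝ≥0∞} (hg : AEStronglyMeasurable g μ) (hh : AEStronglyMeasurable h μ)
    (hp : 1 ≤ p) (hle : ∀ a, f a ≤ g a + h a) :
    eLpNorm f p μ ≤ eLpNorm g p μ + eLpNorm h p μ :=
  (eLpNorm_mono_enorm hle).trans (eLpNorm_add_le hg hh hp)

section

variable {X : Type*} [PseudoEMetricSpace X] [MeasurableSpace X] {p : ℝ≥0∞}

noncomputable def edistLp (p : ℝ≥0∞) (ν : Measure X) (x : X) : ℝ≥0∞ :=
  eLpNorm (edist x) p ν

variable [OpensMeasurableSpace X]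

theorem edistLp_le_edist_add (ν : Measure X) [IsProbabilityMeasure ν] (hp : 1 ≤ p)
    (x x' : X) : edistLp p ν x ≤ edist x x' + edistLp p ν x' := by
  have h := eLpNorm_le_add_of_le (μ := ν) aestronglyMeasurable_const
    (continuous_const.edist continuous_id).aestronglyMeasurable hp (edist_triangle x x')
  rwa [eLpNorm_const_of_isProbabilityMeasure (zero_lt_one.trans_le hp).ne'] at h

theorem continuous_edistLp (ν : Measure X) [IsProbabilityMeasure ν] (hp : 1 ≤ p) :
    Continuous (edistLp p ν) :=
  continuous_of_le_add_edist 1 ENNReal.one_ne_top fun x x' => by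
    rw [one_mul, add_comm]
    exact edistLp_le_edist_add ν hp x x'

theorem edistLp_le_edistLp_add_eLpNorm (μ ν : Measure X) [IsProbabilityMeasure μ]
    [IsProbabilityMeasure ν] (hp : 1 ≤ p) (x : X) :
    edistLp p ν x ≤ edistLp p μ x + eLpNorm (edistLp p ν) p μ := by
  have h := eLpNorm_le_add_of_le (μ := μ) (f := fun _ => edistLp p ν x)
    (continuous_const.edist continuous_id).aestronglyMeasurable
    (continuous_edistLp ν hp).aestronglyMeasurable hp (edistLp_le_edist_add ν hp x)
  rwa [eLpNorm_const_of_isProbabilityMeasure (zero_lt_one.trans_le hp).ne'] at h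

theorem eLpNorm_edistLp_triangle (μ₁ μ₂ μ₃ : Measure X) [IsProbabilityMeasure μ₁]
    [IsProbabilityMeasure μ₂] [IsProbabilityMeasure μ₃] (hp : 1 ≤ p) :
    eLpNorm (edistLp p μ₃) p μ₁ ≤
      eLpNorm (edistLp p μ₂) p μ₁ + eLpNorm (edistLp p μ₃) p μ₂ := by
  have h := eLpNorm_le_add_of_le (μ := μ₁) (continuous_edistLp μ₂ hp).aestronglyMeasurable
    aestronglyMeasurable_const hp (edistLp_le_edistLp_add_eLpNorm μ₂ μ₃ hp)
  rwa [eLpNorm_const_of_isProbabilityMeasure (zero_lt_one.trans_le hp).ne'] at h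

end

theorem pairVar_rpow_half {X : Type*} [MetricSpace X] [MeasurableSpace X] (μ ν : Measure X) :
    pairVar μ ν ^ (1 / 2 : ℝ) = eLpNorm (edistLp 2 ν) 2 μ := by
  have hsq (x y : X) : ENNReal.ofReal (dist x y ^ 2) = edist x y ^ (2 : ℝ) := by
    rw [edist_dist, ENNReal.ofReal_pow dist_nonneg, ← ENNReal.rpow_natCast, Nat.cast_ofNat]
  simp only [eLpNorm_eq_lintegral_rpow_enorm_toReal two_ne_zero ENNReal.ofNat_ne_top, edistLp,
    enorm_eq_self, ENNReal.toReal_ofNat, one_div, ENNReal.rpow_inv_rpow two_ne_zero, pairVar, hsq]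

/-- Triangle inequality for the square root of the variance. -/
theorem sqrt_var_triangle {X : Type*} [MetricSpace X] [MeasurableSpace X] [BorelSpace X]
    (μ₁ μ₂ μ₃ : Measure X) [IsProbabilityMeasure μ₁] [IsProbabilityMeasure μ₂]
    [IsProbabilityMeasure μ₃] :
    (pairVar μ₁ μ₃) ^ (1/2 : ℝ) ≤ (pairVar μ₁ μ₂) ^ (1/2 : ℝ) + (pairVar μ₂ μ₃) ^ (1/2 : ℝ) := by
  simp only [pairVar_rpow_half]
  exact eLpNorm_edistLp_triangle μ₁ μ₂ μ₃ one_le_two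
end

section
/- For any two probability measures μ₁, μ₂ on a metric space with finite self-variances, √Var(μ₁,μ₂) ≤ d_{W₁}(μ₁,μ₂) + √Var(μ₁) + √Var(μ₂), where Var(μ) := Var(μ,μ). -/
open MeasureTheory

/-- The `W₁`-Wasserstein distance, defined via Kantorovich duality as the supremum of
`∫ f dμ₁ − ∫ f dμ₂` over all bounded `1`-Lipschitz functions `f`. -/
noncomputable def dW1 {X : Type*} [MetricSpace X] [MeasurableSpace X]
    (μ₁ μ₂ : Measure X) : ENNReal :=
  ⨆ f : {f : X → ℝ // LipschitzWith 1 f ∧ ∃ C, ∀ x, |f x| ≤ C},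
    ENNReal.ofReal (∫ x, (f : X → ℝ) x ∂μ₁ - ∫ x, (f : X → ℝ) x ∂μ₂)

/-!
With `F ν x := ‖d(x, ·)‖_{L²(ν)} = √Var(δₓ, ν)` one has `√Var(μ, ν) = ‖F ν‖_{L²(μ)}`, and
Minkowski makes `F ν` `1`-Lipschitz. Averaging `F μ₂ x ≤ F μ₂ x' + d(x, x')` over `x' ∼ μ₁` and
using Jensen gives `F μ₂ ≤ m + F μ₁` with `m := ∫ F μ₂ dμ₁`, hence `√Var(μ₁, μ₂) ≤ m + √Var(μ₁)`
by Minkowski again. Testing the `1`-Lipschitz function `F μ₂` against `d_{W₁}` gives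
`m ≤ d_{W₁}(μ₁, μ₂) + ∫ F μ₂ dμ₂ ≤ d_{W₁}(μ₁, μ₂) + √Var(μ₂)`.
-/

open scoped ENNReal

section TruncatedLipschitz

variable {X : Type*} [PseudoMetricSpace X] {g : X → ℝ≥0∞}

lemma min_natCast_ne_top (a : ℝ≥0∞) (n : ℕ) : min a n ≠ ∞ :=
  (min_lt_of_right_lt (ENNReal.natCast_lt_top n)).ne

lemma lipschitzWith_one_toReal_min_natCast (hg : ∀ x y, g x ≤ g y + edist x y) (n : ℕ) :
    LipschitzWith 1 fun x => (min (g x) n).toReal := by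
  refine LipschitzWith.of_le_add fun x y => ?_
  rw [dist_edist]
  refine ENNReal.toReal_le_add ?_ (min_natCast_ne_top _ n) (edist_ne_top x y)
  calc min (g x) n ≤ min (g y + edist x y) (n + edist x y) := min_le_min (hg x y) le_self_add
    _ = min (g y) n + edist x y := min_add_add_right _ _ _

lemma iSup_min_natCast (a : ℝ≥0∞) : ⨆ n : ℕ, min a n = a := by
  rw [← inf_iSup_eq, ENNReal.iSup_natCast, inf_top_eq]

lemma measurable_of_le_add_edist [MeasurableSpace X] [OpensMeasurableSpace X]
    (hg : ∀ x y, g x ≤ g y + edist x y) : Measurable g := by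
  have htrunc (n : ℕ) : Measurable fun x => min (g x) n := by
    convert (lipschitzWith_one_toReal_min_natCast hg n).continuous.measurable.ennreal_ofReal
      using 2 with x
    exact (ENNReal.ofReal_toReal (min_natCast_ne_top _ n)).symm
  simpa only [iSup_min_natCast] using Measurable.iSup htrunc

end TruncatedLipschitz

section Wasserstein

variable {X : Type*} [MetricSpace X] [MeasurableSpace X] (μ₁ μ₂ : Measure X)

lemma ofReal_integral_sub_le_dW1 {f : X → ℝ} (hf : LipschitzWith 1 f) {C : ℝ}
    (hC : ∀ x, |f x| ≤ C) : ENNReal.ofReal (∫ x, f x ∂μ₁ - ∫ x, f x ∂μ₂) ≤ dW1 μ₁ μ₂ :=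
  le_iSup_of_le (⟨f, hf, C, hC⟩ : {f : X → ℝ // LipschitzWith 1 f ∧ ∃ C, ∀ x, |f x| ≤ C}) le_rfl

variable [OpensMeasurableSpace X] [IsFiniteMeasure μ₁] [IsFiniteMeasure μ₂]

lemma lintegral_ofReal_le_dW1_add {f : X → ℝ} (hf : LipschitzWith 1 f) (hf₀ : 0 ≤ f) {C : ℝ}
    (hC : ∀ x, f x ≤ C) :
    ∫⁻ x, ENNReal.ofReal (f x) ∂μ₁ ≤ dW1 μ₁ μ₂ + ∫⁻ x, ENNReal.ofReal (f x) ∂μ₂ := by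
  have habs (x : X) : |f x| ≤ C := (abs_of_nonneg (hf₀ x)).trans_le (hC x)
  have hint (μ : Measure X) [IsFiniteMeasure μ] : Integrable f μ :=
    .of_bound hf.continuous.aestronglyMeasurable C (ae_of_all _ habs)
  rw [← ofReal_integral_eq_lintegral_ofReal (hint μ₁) (ae_of_all _ hf₀),
    ← ofReal_integral_eq_lintegral_ofReal (hint μ₂) (ae_of_all _ hf₀)]
  calc ENNReal.ofReal (∫ x, f x ∂μ₁)
      = ENNReal.ofReal ((∫ x, f x ∂μ₁ - ∫ x, f x ∂μ₂) + ∫ x, f x ∂μ₂) := by rw [sub_add_cancel]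
    _ ≤ ENNReal.ofReal (∫ x, f x ∂μ₁ - ∫ x, f x ∂μ₂) + ENNReal.ofReal (∫ x, f x ∂μ₂) :=
        ENNReal.ofReal_add_le
    _ ≤ dW1 μ₁ μ₂ + ENNReal.ofReal (∫ x, f x ∂μ₂) := by
        gcongr
        exact ofReal_integral_sub_le_dW1 μ₁ μ₂ hf habs

/-- Monotone convergence over the truncations `min g n` removes the boundedness needed to test
`g` against `dW1`. -/
lemma lintegral_le_dW1_add {g : X → ℝ≥0∞} (hg : ∀ x y, g x ≤ g y + edist x y) :
    ∫⁻ x, g x ∂μ₁ ≤ dW1 μ₁ μ₂ + ∫⁻ x, g x ∂μ₂ := by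
  have htrunc (n : ℕ) : ∫⁻ x, min (g x) n ∂μ₁ ≤ dW1 μ₁ μ₂ + ∫⁻ x, g x ∂μ₂ := by
    have hbound (x : X) : (min (g x) n).toReal ≤ n := by
      simpa using ENNReal.toReal_mono (ENNReal.natCast_ne_top n) (min_le_right (g x) n)
    calc ∫⁻ x, min (g x) n ∂μ₁ = ∫⁻ x, ENNReal.ofReal (min (g x) n).toReal ∂μ₁ := by
          simp_rw [ENNReal.ofReal_toReal (min_natCast_ne_top _ n)]
      _ ≤ dW1 μ₁ μ₂ + ∫⁻ x, ENNReal.ofReal (min (g x) n).toReal ∂μ₂ :=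
          lintegral_ofReal_le_dW1_add μ₁ μ₂ (lipschitzWith_one_toReal_min_natCast hg n)
            (fun x => ENNReal.toReal_nonneg) hbound
      _ ≤ dW1 μ₁ μ₂ + ∫⁻ x, g x ∂μ₂ := by
          gcongr with x
          rw [ENNReal.ofReal_toReal (min_natCast_ne_top _ n)]
          exact min_le_left _ _
  have hmeas (n : ℕ) : Measurable fun x => min (g x) n :=
    (measurable_of_le_add_edist hg).min measurable_const
  have hmono : Monotone fun (n : ℕ) x => min (g x) n := fun m n hmn x =>
    min_le_min_left _ (Nat.cast_le.2 hmn)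
  calc ∫⁻ x, g x ∂μ₁ = ∫⁻ x, ⨆ n : ℕ, min (g x) n ∂μ₁ := by simp_rw [iSup_min_natCast]
    _ = ⨆ n : ℕ, ∫⁻ x, min (g x) n ∂μ₁ := lintegral_iSup hmeas hmono
    _ ≤ dW1 μ₁ μ₂ + ∫⁻ x, g x ∂μ₂ := iSup_le htrunc

end Wasserstein

lemma lintegral_le_eLpNorm_two {α : Type*} [MeasurableSpace α] {μ : Measure α}
    [IsProbabilityMeasure μ] {f : α → ℝ≥0∞} (hf : Measurable f) : ∫⁻ x, f x ∂μ ≤ eLpNorm f 2 μ := by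
  simpa only [eLpNorm_one_eq_lintegral_enorm, enorm_eq_self] using
    eLpNorm_le_eLpNorm_of_exponent_le one_le_two hf.aestronglyMeasurable

section DistL2

variable {X : Type*} [MetricSpace X] [MeasurableSpace X]

noncomputable def distL2 (ν : Measure X) (x : X) : ℝ≥0∞ :=
  eLpNorm (fun y => dist x y) 2 ν

lemma distL2_sq (ν : Measure X) (x : X) :
    distL2 ν x ^ 2 = ∫⁻ y, ENNReal.ofReal (dist x y ^ 2) ∂ν := by
  have h := eLpNorm_nnreal_pow_eq_lintegral (f := fun y => dist x y) (μ := ν) two_ne_zero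
  simp only [NNReal.coe_ofNat, ENNReal.rpow_two, Real.enorm_eq_ofReal dist_nonneg,
    ← ENNReal.ofReal_pow dist_nonneg] at h
  exact h

lemma rpow_half_pairVar_eq (μ ν : Measure X) :
    pairVar μ ν ^ (1 / 2 : ℝ) = eLpNorm (distL2 ν) 2 μ := by
  simp only [eLpNorm_eq_lintegral_rpow_enorm_toReal two_ne_zero ENNReal.ofNat_ne_top,
    enorm_eq_self, ENNReal.toReal_ofNat, ENNReal.rpow_two, distL2_sq, pairVar]

variable [OpensMeasurableSpace X] (μ ν : Measure X) [IsProbabilityMeasure μ]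
  [IsProbabilityMeasure ν]

lemma distL2_le_add_edist (x x' : X) : distL2 ν x ≤ distL2 ν x' + edist x x' := by
  calc eLpNorm (fun y => dist x y) 2 ν ≤ eLpNorm (fun y => dist x' y + dist x x') 2 ν :=
        eLpNorm_mono fun y => by
          rw [Real.norm_of_nonneg dist_nonneg, Real.norm_of_nonneg (by positivity)]
          linarith [dist_triangle x x' y]
    _ ≤ eLpNorm (fun y => dist x' y) 2 ν + eLpNorm (fun _ => dist x x') 2 ν :=
        eLpNorm_add_le (continuous_const.dist continuous_id).aestronglyMeasurable
          aestronglyMeasurable_const one_le_two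
    _ = distL2 ν x' + edist x x' := by
        rw [eLpNorm_const _ two_ne_zero (IsProbabilityMeasure.ne_zero ν), measure_univ,
          ENNReal.one_rpow, mul_one, Real.enorm_eq_ofReal dist_nonneg, ← edist_dist, distL2]

lemma measurable_distL2 : Measurable (distL2 ν) :=
  measurable_of_le_add_edist (distL2_le_add_edist ν)

lemma lintegral_edist_le_distL2 (x : X) : ∫⁻ y, edist x y ∂ν ≤ distL2 ν x := by
  calc ∫⁻ y, edist x y ∂ν = eLpNorm (fun y => dist x y) 1 ν := by
        simp only [eLpNorm_one_eq_lintegral_enorm, Real.enorm_eq_ofReal dist_nonneg, edist_dist]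
    _ ≤ distL2 ν x := eLpNorm_le_eLpNorm_of_exponent_le one_le_two
        (continuous_const.dist continuous_id).aestronglyMeasurable

lemma distL2_le_lintegral_add_distL2 (x : X) :
    distL2 ν x ≤ ∫⁻ x', distL2 ν x' ∂μ + distL2 μ x := by
  calc distL2 ν x = ∫⁻ _, distL2 ν x ∂μ := by simp
    _ ≤ ∫⁻ x', distL2 ν x' + edist x x' ∂μ := lintegral_mono fun x' => by
        simpa only [edist_comm] using distL2_le_add_edist ν x x'
    _ = ∫⁻ x', distL2 ν x' ∂μ + ∫⁻ x', edist x x' ∂μ := lintegral_add_left (measurable_distL2 ν) _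
    _ ≤ ∫⁻ x', distL2 ν x' ∂μ + distL2 μ x := by gcongr; exact lintegral_edist_le_distL2 μ x

end DistL2

theorem sqrt_var_le_dW1_add_general {X : Type*} [MetricSpace X] [MeasurableSpace X] [BorelSpace X]
    (μ₁ μ₂ : Measure X) [IsProbabilityMeasure μ₁] [IsProbabilityMeasure μ₂] :
    (pairVar μ₁ μ₂) ^ (1/2 : ℝ) ≤
      dW1 μ₁ μ₂ + (pairVar μ₁ μ₁) ^ (1/2 : ℝ) + (pairVar μ₂ μ₂) ^ (1/2 : ℝ) := by
  set m := ∫⁻ x, distL2 μ₂ x ∂μ₁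
  have hm : m ≤ dW1 μ₁ μ₂ + pairVar μ₂ μ₂ ^ (1 / 2 : ℝ) := by
    rw [rpow_half_pairVar_eq]
    calc m ≤ dW1 μ₁ μ₂ + ∫⁻ x, distL2 μ₂ x ∂μ₂ :=
          lintegral_le_dW1_add μ₁ μ₂ (distL2_le_add_edist μ₂)
      _ ≤ dW1 μ₁ μ₂ + eLpNorm (distL2 μ₂) 2 μ₂ := by
          gcongr; exact lintegral_le_eLpNorm_two (measurable_distL2 μ₂)
  calc pairVar μ₁ μ₂ ^ (1 / 2 : ℝ) = eLpNorm (distL2 μ₂) 2 μ₁ := rpow_half_pairVar_eq μ₁ μ₂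
    _ ≤ eLpNorm (fun x => m + distL2 μ₁ x) 2 μ₁ := eLpNorm_mono_enorm fun x => by
        simpa only [enorm_eq_self] using distL2_le_lintegral_add_distL2 μ₁ μ₂ x
    _ ≤ eLpNorm (fun _ => m) 2 μ₁ + eLpNorm (distL2 μ₁) 2 μ₁ :=
        eLpNorm_add_le aestronglyMeasurable_const (measurable_distL2 μ₁).aestronglyMeasurable
          one_le_two
    _ = m + pairVar μ₁ μ₁ ^ (1 / 2 : ℝ) := by
        rw [eLpNorm_const _ two_ne_zero (IsProbabilityMeasure.ne_zero μ₁), measure_univ,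
          ENNReal.one_rpow, mul_one, enorm_eq_self, rpow_half_pairVar_eq]
    _ ≤ dW1 μ₁ μ₂ + pairVar μ₁ μ₁ ^ (1 / 2 : ℝ) + pairVar μ₂ μ₂ ^ (1 / 2 : ℝ) := by
        rw [add_right_comm]
        gcongr

/-- If the self-variances are finite, then
`√Var(μ₁,μ₂) ≤ d_{W₁}(μ₁,μ₂) + √Var(μ₁) + √Var(μ₂)`. -/
theorem sqrt_var_le_dW1_add {X : Type*} [MetricSpace X] [MeasurableSpace X] [BorelSpace X]
    (μ₁ μ₂ : Measure X) [IsProbabilityMeasure μ₁] [IsProbabilityMeasure μ₂]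
    (h₁ : pairVar μ₁ μ₁ < ⊤) (h₂ : pairVar μ₂ μ₂ < ⊤) :
    (pairVar μ₁ μ₂) ^ (1/2 : ℝ) ≤
      dW1 μ₁ μ₂ + (pairVar μ₁ μ₁) ^ (1/2 : ℝ) + (pairVar μ₂ μ₂) ^ (1/2 : ℝ) :=
  sqrt_var_le_dW1_add_general μ₁ μ₂
end

section
/- Let R : [t₀, T] → ℝ be differentiable with R'(t) ≥ (2/n) R(t)² and R(t₀) ≥ R_min, where R_min < 0 and n > 0. Then for all t ∈ [t₀, T], R(t) ≥ (n/2)·R_min / (n/2 − R_min (t − t₀)). -/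
/-! Along the ODE the reciprocal decreases at rate at least `k`: `(1/f)' = -f'/f² ≤ -k`.
Integrating from `a` gives `1/f(t) ≤ 1/f(a) - k (t - a) ≤ 1/m - k (t - a)` while `f` is
negative, which is the claimed bound after inverting. Since `f` is nondecreasing, it is
negative on all of `[a, t]` unless `f(t) ≥ 0`, where the negative bound is trivial. -/

open Set

section Riccati

variable {f f' : ℝ → ℝ} {k a b : ℝ}

lemma monotoneOn_Icc_of_sq_le_deriv (hk : 0 ≤ k) (hf : ∀ t ∈ Icc a b, HasDerivAt f (f' t) t)
    (hode : ∀ t ∈ Icc a b, k * f t ^ 2 ≤ f' t) :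
    MonotoneOn f (Icc a b) :=
  monotoneOn_of_hasDerivWithinAt_nonneg (convex_Icc a b)
    (fun t ht => (hf t ht).continuousAt.continuousWithinAt)
    (fun t ht => (hf t (interior_subset ht)).hasDerivWithinAt)
    (fun t ht => (mul_nonneg hk (sq_nonneg _)).trans (hode t (interior_subset ht)))

lemma mul_sub_le_inv_sub_inv_of_sq_le_deriv (hab : a ≤ b)
    (hf : ∀ t ∈ Icc a b, HasDerivAt f (f' t) t) (hne : ∀ t ∈ Icc a b, f t ≠ 0)
    (hode : ∀ t ∈ Icc a b, k * f t ^ 2 ≤ f' t) :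
    k * (b - a) ≤ (f a)⁻¹ - (f b)⁻¹ := by
  have hderiv : ∀ t ∈ Icc a b,
      HasDerivAt (fun s => (f s)⁻¹ + s * k) (-(f' t) / f t ^ 2 + k) t := fun t ht =>
    ((hf t ht).inv (hne t ht)).add (hasDerivAt_mul_const k)
  have hanti : AntitoneOn (fun s => (f s)⁻¹ + s * k) (Icc a b) :=
    antitoneOn_of_hasDerivWithinAt_nonpos (convex_Icc a b)
      (fun t ht => (hderiv t ht).continuousAt.continuousWithinAt)
      (fun t ht => (hderiv t (interior_subset ht)).hasDerivWithinAt)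
      (fun t ht => by
        have ht' := interior_subset ht
        rw [neg_div, neg_add_nonpos_iff, le_div_iff₀ (sq_pos_of_ne_zero (hne t ht'))]
        exact hode t ht')
  have := hanti (left_mem_Icc.2 hab) (right_mem_Icc.2 hab) hab
  simp only at this
  linarith

theorem div_le_of_sq_le_deriv (hk : 0 ≤ k) {m : ℝ} (hm : m < 0)
    (hf : ∀ t ∈ Icc a b, HasDerivAt f (f' t) t) (hode : ∀ t ∈ Icc a b, k * f t ^ 2 ≤ f' t)
    (hinit : m ≤ f a) :
    ∀ t ∈ Icc a b, m / (1 - k * m * (t - a)) ≤ f t := by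
  intro t ht
  have hden : 1 ≤ 1 - k * m * (t - a) := by
    linarith [mul_nonneg (mul_nonneg hk (neg_nonneg.2 hm.le)) (sub_nonneg.2 ht.1)]
  rcases le_or_gt 0 (f t) with hpos | hneg
  · exact (div_neg_of_neg_of_pos hm (by linarith)).le.trans hpos
  have hmono := monotoneOn_Icc_of_sq_le_deriv hk hf hode
  have hsub : Icc a t ⊆ Icc a b := Icc_subset_Icc_right ht.2
  have hneg_on : ∀ s ∈ Icc a t, f s < 0 := fun s hs =>
    (hmono (hsub hs) ht hs.2).trans_lt hneg
  have hrate := mul_sub_le_inv_sub_inv_of_sq_le_deriv ht.1 (fun s hs => hf s (hsub hs))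
    (fun s hs => (hneg_on s hs).ne) (fun s hs => hode s (hsub hs))
  have hfa : (f a)⁻¹ ≤ m⁻¹ :=
    (inv_le_inv_of_neg (hneg_on a (left_mem_Icc.2 ht.1)) hm).2 hinit
  have hQ : 0 < k * (t - a) - m⁻¹ := by
    linarith [mul_nonneg hk (sub_nonneg.2 ht.1), inv_lt_zero.2 hm]
  have hbound : k * (t - a) - m⁻¹ ≤ -(f t)⁻¹ := by linarith
  calc m / (1 - k * m * (t - a)) = -(1 / (k * (t - a) - m⁻¹)) := by
        have : 1 - k * m * (t - a) = -m * (k * (t - a) - m⁻¹) := by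
          linear_combination -(mul_inv_cancel₀ hm.ne)
        rw [this, neg_mul, div_neg, ← div_div, div_self hm.ne]
    _ ≤ -(1 / -(f t)⁻¹) := neg_le_neg (one_div_le_one_div_of_le hQ hbound)
    _ = f t := by simp

end Riccati

/-- ODE comparison for the lower scalar curvature bound: if `R' ≥ (2/n) R²` on `[t₀,T]`
and `R(t₀) ≥ R_min` with `R_min < 0`, `n > 0`, then
`R(t) ≥ (n/2) R_min / (n/2 − R_min (t − t₀))` on `[t₀,T]`. -/
theorem scalar_ode_lower_bound (n Rmin t₀ T : ℝ) (hn : 0 < n) (hRmin : Rmin < 0)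
    (R R' : ℝ → ℝ)
    (hderiv : ∀ t ∈ Set.Icc t₀ T, HasDerivAt R (R' t) t)
    (hode : ∀ t ∈ Set.Icc t₀ T, (2 / n) * (R t) ^ 2 ≤ R' t)
    (hinit : Rmin ≤ R t₀) :
    ∀ t ∈ Set.Icc t₀ T, (n / 2) * Rmin / (n / 2 - Rmin * (t - t₀)) ≤ R t := by
  intro t ht
  have hrescale : (n / 2) * Rmin / (n / 2 - Rmin * (t - t₀))
      = Rmin / (1 - 2 / n * Rmin * (t - t₀)) := by
    rw [← mul_div_mul_left Rmin _ (div_ne_zero hn.ne' two_ne_zero)]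
    congr 1
    field_simp
  rw [hrescale]
  exact div_le_of_sq_le_deriv (by positivity) hRmin hderiv hode hinit t ht
end

section
/- Let H : [0,1] → ℝ and F : [0,1] → ℝ be C² functions with H'' ≤ 0, F'' ≤ 0, F ≥ 0, H ≤ F on (0,1), and H(0) = H(1) = F(0) = F(1) = 0. Then ∫₀¹ (H'(a))² da ≤ ∫₀¹ (F'(a))² da. -/
/-!
Since `F'² = H'² + (F' - H')² + 2 H' (F' - H')`, it suffices that `∫ H' (F - H)' ≥ 0`.
Integrating by parts, and using that `F - H` vanishes at both endpoints, this integral equals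
`-∫ H'' (F - H)`, which is nonnegative because `H'' ≤ 0` and `F - H ≥ 0`.
-/

open MeasureTheory Set

theorem integral_sq_le_integral_sq_of_integral_mul_sub_nonneg {α : Type*} [MeasurableSpace α]
    {μ : Measure α} {f g : α → ℝ} (hf : Integrable (fun x ↦ f x ^ 2) μ)
    (hg : Integrable (fun x ↦ g x ^ 2) μ) (hfg : Integrable (fun x ↦ f x * (g x - f x)) μ)
    (h : 0 ≤ ∫ x, f x * (g x - f x) ∂μ) :
    ∫ x, f x ^ 2 ∂μ ≤ ∫ x, g x ^ 2 ∂μ :=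
  calc ∫ x, f x ^ 2 ∂μ
      ≤ ∫ x, f x ^ 2 ∂μ + 2 * ∫ x, f x * (g x - f x) ∂μ := by linarith
    _ = ∫ x, (f x ^ 2 + 2 * (f x * (g x - f x))) ∂μ := by
      rw [integral_add hf (hfg.const_mul 2), integral_const_mul]
    _ ≤ ∫ x, g x ^ 2 ∂μ :=
      integral_mono (hf.add (hfg.const_mul 2)) hg fun x ↦ by nlinarith [sq_nonneg (g x - f x)]

theorem intervalIntegrable_deriv_of_nonpos {u u' : ℝ → ℝ} {a b : ℝ} (hab : a ≤ b)
    (hu : ∀ x ∈ Icc a b, HasDerivWithinAt u (u' x) (Icc a b) x)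
    (hu' : ∀ x ∈ Ioo a b, u' x ≤ 0) :
    IntervalIntegrable u' volume a b := by
  have hneg : IntegrableOn (fun x ↦ -u' x) (Ioc a b) :=
    intervalIntegral.integrableOn_deriv_of_nonneg (g := fun x ↦ -u x)
      (fun x hx ↦ (hu x hx).continuousWithinAt.neg)
      (fun x hx ↦ ((hu x (Ioo_subset_Icc_self hx)).hasDerivAt (Icc_mem_nhds hx.1 hx.2)).neg)
      (fun x hx ↦ neg_nonneg.2 (hu' x hx))
  simpa [intervalIntegrable_iff_integrableOn_Ioc_of_le hab] using hneg.neg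

theorem integral_mul_deriv_nonneg_of_deriv_nonpos {u u' v v' : ℝ → ℝ} {a b : ℝ} (hab : a ≤ b)
    (hu : ∀ x ∈ Icc a b, HasDerivWithinAt u (u' x) (Icc a b) x)
    (hu' : ∀ x ∈ Ioo a b, u' x ≤ 0)
    (hv : ∀ x ∈ Icc a b, HasDerivWithinAt v (v' x) (Icc a b) x)
    (hv' : IntervalIntegrable v' volume a b)
    (hv_nonneg : ∀ x ∈ Ioo a b, 0 ≤ v x) (hva : v a = 0) (hvb : v b = 0) :
    0 ≤ ∫ x in a..b, u x * v' x := by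
  have hparts := intervalIntegral.integral_mul_deriv_eq_deriv_mul_of_hasDerivWithinAt
    (by rwa [uIcc_of_le hab]) (by rwa [uIcc_of_le hab])
    (intervalIntegrable_deriv_of_nonpos hab hu hu') hv'
  have hsign : ∫ x in a..b, u' x * v x ≤ 0 := by
    rw [intervalIntegral.integral_of_le hab, integral_Ioc_eq_integral_Ioo]
    exact setIntegral_nonpos measurableSet_Ioo fun x hx ↦
      mul_nonpos_of_nonpos_of_nonneg (hu' x hx) (hv_nonneg x hx)
  rw [hparts, hva, hvb]
  linarith

theorem dirichlet_energy_comparison_general (H F H' F' H'' F'' : ℝ → ℝ)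
    (hHd : ∀ a ∈ Set.Icc (0 : ℝ) 1, HasDerivWithinAt H (H' a) (Set.Icc 0 1) a)
    (hHd2 : ∀ a ∈ Set.Icc (0 : ℝ) 1, HasDerivWithinAt H' (H'' a) (Set.Icc 0 1) a)
    (hFd : ∀ a ∈ Set.Icc (0 : ℝ) 1, HasDerivWithinAt F (F' a) (Set.Icc 0 1) a)
    (hFd2 : ∀ a ∈ Set.Icc (0 : ℝ) 1, HasDerivWithinAt F' (F'' a) (Set.Icc 0 1) a)
    (hHconc : ∀ a ∈ Set.Icc (0 : ℝ) 1, H'' a ≤ 0)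
    (hHF : ∀ a ∈ Set.Ioo (0 : ℝ) 1, H a ≤ F a)
    (hH0 : H 0 = 0) (hH1 : H 1 = 0) (hF0 : F 0 = 0) (hF1 : F 1 = 0) :
    ∫ a in Set.Icc (0 : ℝ) 1, (H' a) ^ 2 ≤ ∫ a in Set.Icc (0 : ℝ) 1, (F' a) ^ 2 := by
  have hH'c : ContinuousOn H' (Icc 0 1) := fun a ha ↦ (hHd2 a ha).continuousWithinAt
  have hF'c : ContinuousOn F' (Icc 0 1) := fun a ha ↦ (hFd2 a ha).continuousWithinAt
  have hcross : 0 ≤ ∫ a in (0 : ℝ)..1, H' a * (F' a - H' a) :=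
    integral_mul_deriv_nonneg_of_deriv_nonpos zero_le_one hHd2
      (fun a ha ↦ hHconc a (Ioo_subset_Icc_self ha)) (fun a ha ↦ (hFd a ha).sub (hHd a ha))
      ((hF'c.sub hH'c).intervalIntegrable_of_Icc zero_le_one)
      (fun a ha ↦ sub_nonneg.2 (hHF a ha)) (by simp [hF0, hH0]) (by simp [hF1, hH1])
  rw [intervalIntegral.integral_of_le zero_le_one, ← integral_Icc_eq_integral_Ioc] at hcross
  exact integral_sq_le_integral_sq_of_integral_mul_sub_nonneg ((hH'c.pow 2).integrableOn_Icc)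
    ((hF'c.pow 2).integrableOn_Icc) ((hH'c.mul (hF'c.sub hH'c)).integrableOn_Icc) hcross

/-- Variational comparison: if `H, F` are C² on `[0,1]` (with derivatives `H', H''` resp.
`F', F''` on `[0,1]`), concave (`H'' ≤ 0`, `F'' ≤ 0`), `F ≥ 0`, `H ≤ F` on `(0,1)`, and
`H(0) = H(1) = F(0) = F(1) = 0`, then `∫₀¹ (H')² ≤ ∫₀¹ (F')²`. -/
theorem dirichlet_energy_comparison (H F H' F' H'' F'' : ℝ → ℝ)
    (hHd : ∀ a ∈ Set.Icc (0 : ℝ) 1, HasDerivWithinAt H (H' a) (Set.Icc 0 1) a)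
    (hHd2 : ∀ a ∈ Set.Icc (0 : ℝ) 1, HasDerivWithinAt H' (H'' a) (Set.Icc 0 1) a)
    (hFd : ∀ a ∈ Set.Icc (0 : ℝ) 1, HasDerivWithinAt F (F' a) (Set.Icc 0 1) a)
    (hFd2 : ∀ a ∈ Set.Icc (0 : ℝ) 1, HasDerivWithinAt F' (F'' a) (Set.Icc 0 1) a)
    (hHcont : ContinuousOn H'' (Set.Icc 0 1)) (hFcont : ContinuousOn F'' (Set.Icc 0 1))
    (hHconc : ∀ a ∈ Set.Icc (0 : ℝ) 1, H'' a ≤ 0)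
    (hFconc : ∀ a ∈ Set.Icc (0 : ℝ) 1, F'' a ≤ 0)
    (hFpos : ∀ a ∈ Set.Icc (0 : ℝ) 1, 0 ≤ F a)
    (hHF : ∀ a ∈ Set.Ioo (0 : ℝ) 1, H a ≤ F a)
    (hH0 : H 0 = 0) (hH1 : H 1 = 0) (hF0 : F 0 = 0) (hF1 : F 1 = 0) :
    ∫ a in Set.Icc (0 : ℝ) 1, (H' a) ^ 2 ≤ ∫ a in Set.Icc (0 : ℝ) 1, (F' a) ^ 2 :=
  dirichlet_energy_comparison_general H F H' F' H'' F'' hHd hHd2 hFd hFd2 hHconc hHF hH0 hH1 hF0 hF1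
end

section
/- If (x₁,t₁) ∈ P*(x₂,t₂;A,−T⁻,T⁺) (in the abstract setting below), then (x₂,t₂) ∈ P*(x₁,t₁;A,−(T⁻+T⁺),T⁻), and moreover P*(x₂,t₂;A,−T⁻,T⁺) ⊂ P*(x₁,t₁;2A,−(T⁻+T⁺),T⁻+T⁺). -/
/-!
Both claims are read off at the base time `t₂ − T⁻` of `P*(x₂,t₂;A,−T⁻,T⁺)`. Since
`t₁ ≤ t₂ + T⁺`, the earlier base time `t₁ − (T⁻+T⁺)` lies below it, so by backward monotonicity
of `d_{W₁}` any distance `< A'` from `ν_{x₁,t₁}` at `t₂ − T⁻` persists at `t₁ − (T⁻+T⁺)`. At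
`t₂ − T⁻` the distance from `ν_{x₁,t₁}` to `ν_{x₂,t₂}` is `< A` by symmetry, and to any point of
`P*(x₂,t₂;A,−T⁻,T⁺)` it is `< 2A` by the triangle inequality through `ν_{x₂,t₂}`.
-/

/-- The abstract `P*`-parabolic neighborhood `P*(x₀,t₀;A,−T⁻,T⁺)`:
all points `(x,t)` with `t ∈ I`, `t₀ − T⁻ ≤ t ≤ t₀ + T⁺` and
`d_{W₁}^{t₀−T⁻}(ν_{x₀,t₀;t₀−T⁻}, ν_{x,t;t₀−T⁻}) < A`. -/
def Pstar {M S : Type*} (I : Set ℝ) (ν : M → ℝ → ℝ → S) (dW : ℝ → S → S → ℝ)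
    (x₀ : M) (t₀ A Tm Tp : ℝ) : Set (M × ℝ) :=
  {p | p.2 ∈ I ∧ t₀ - Tm ≤ p.2 ∧ p.2 ≤ t₀ + Tp ∧
    dW (t₀ - Tm) (ν x₀ t₀ (t₀ - Tm)) (ν p.1 p.2 (t₀ - Tm)) < A}

section Pstar

variable {M S : Type*} {I : Set ℝ} {ν : M → ℝ → ℝ → S} {dW : ℝ → S → S → ℝ}

theorem dW_lt_two_mul_of_mem_Pstar
    (htri : ∀ s ∈ I, ∀ a b c : S, dW s a c ≤ dW s a b + dW s b c)
    (hsymm : ∀ s ∈ I, ∀ a b : S, dW s a b = dW s b a)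
    {x₀ x y : M} {t₀ t u A Tm Tp : ℝ} (hbase : t₀ - Tm ∈ I)
    (hx : (x, t) ∈ Pstar I ν dW x₀ t₀ A Tm Tp) (hy : (y, u) ∈ Pstar I ν dW x₀ t₀ A Tm Tp) :
    dW (t₀ - Tm) (ν x t (t₀ - Tm)) (ν y u (t₀ - Tm)) < 2 * A :=
  calc dW (t₀ - Tm) (ν x t (t₀ - Tm)) (ν y u (t₀ - Tm))
      ≤ dW (t₀ - Tm) (ν x t (t₀ - Tm)) (ν x₀ t₀ (t₀ - Tm))
          + dW (t₀ - Tm) (ν x₀ t₀ (t₀ - Tm)) (ν y u (t₀ - Tm)) := htri _ hbase _ _ _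
    _ < 2 * A := by
      rw [hsymm _ hbase (ν x t _)]
      linarith [hx.2.2.2, hy.2.2.2]

theorem mem_Pstar_of_dW_lt
    (hmono : ∀ (x₁ : M) (t₁ : ℝ) (x₂ : M) (t₂ : ℝ), t₁ ∈ I → t₂ ∈ I →
      ∀ s₁ ∈ I, ∀ s₂ ∈ I, s₁ ≤ s₂ → s₂ ≤ t₁ → s₂ ≤ t₂ →
        dW s₁ (ν x₁ t₁ s₁) (ν x₂ t₂ s₁) ≤ dW s₂ (ν x₁ t₁ s₂) (ν x₂ t₂ s₂))
    {x₀ x : M} {t₀ t s A Tm Tp : ℝ} (ht : t ∈ I) (ht₀ : t₀ ∈ I) (hs : s ∈ I)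
    (hbase : t₀ - Tm ∈ I) (hbase_le : t₀ - Tm ≤ s) (hs_le₀ : s ≤ t₀) (hs_le : s ≤ t)
    (ht_le : t ≤ t₀ + Tp) (hdist : dW s (ν x₀ t₀ s) (ν x t s) < A) :
    (x, t) ∈ Pstar I ν dW x₀ t₀ A Tm Tp :=
  ⟨ht, hbase_le.trans hs_le, ht_le,
    (hmono x₀ t₀ x t ht₀ ht _ hbase s hs hbase_le hs_le₀ hs_le).trans_lt hdist⟩

end Pstar

theorem Pstar_symmetric_containment_general {M S : Type*} (I : Set ℝ) (ν : M → ℝ → ℝ → S)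
    (dW : ℝ → S → S → ℝ)
    (htri : ∀ s ∈ I, ∀ a b c : S, dW s a c ≤ dW s a b + dW s b c)
    (hsymm : ∀ s ∈ I, ∀ a b : S, dW s a b = dW s b a)
    (hmono : ∀ (x₁ : M) (t₁ : ℝ) (x₂ : M) (t₂ : ℝ), t₁ ∈ I → t₂ ∈ I →
      ∀ s₁ ∈ I, ∀ s₂ ∈ I, s₁ ≤ s₂ → s₂ ≤ t₁ → s₂ ≤ t₂ →
        dW s₁ (ν x₁ t₁ s₁) (ν x₂ t₂ s₁) ≤ dW s₂ (ν x₁ t₁ s₂) (ν x₂ t₂ s₂))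
    (x₁ x₂ : M) (t₁ t₂ A Tm Tp : ℝ)
    (hTm : 0 ≤ Tm)
    (ht₂ : t₂ ∈ I) (hI₁ : t₂ - Tm ∈ I) (hI₂ : t₁ - (Tm + Tp) ∈ I)
    (hmem : (x₁, t₁) ∈ Pstar I ν dW x₂ t₂ A Tm Tp) :
    (x₂, t₂) ∈ Pstar I ν dW x₁ t₁ A (Tm + Tp) Tm ∧
      Pstar I ν dW x₂ t₂ A Tm Tp ⊆ Pstar I ν dW x₁ t₁ (2 * A) (Tm + Tp) (Tm + Tp) := by
  have ⟨ht₁, hl, hu, hd⟩ := hmem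
  have hbase_le : t₁ - (Tm + Tp) ≤ t₂ - Tm := by linarith
  refine ⟨mem_Pstar_of_dW_lt hmono ht₂ ht₁ hI₁ hI₂ hbase_le hl (by linarith) (by linarith)
    (by rwa [hsymm _ hI₁]), ?_⟩
  rintro ⟨x, t⟩ hxt
  exact mem_Pstar_of_dW_lt hmono hxt.1 ht₁ hI₁ hI₂ hbase_le hl hxt.2.1
    (by linarith [hxt.2.2.1])
    (dW_lt_two_mul_of_mem_Pstar htri hsymm hI₁ hmem hxt)

/-- Symmetry-type containment: if `(x₁,t₁) ∈ P*(x₂,t₂;A,−T⁻,T⁺)`, then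
`(x₂,t₂) ∈ P*(x₁,t₁;A,−(T⁻+T⁺),T⁻)` and
`P*(x₂,t₂;A,−T⁻,T⁺) ⊆ P*(x₁,t₁;2A,−(T⁻+T⁺),T⁻+T⁺)`, in the abstract setting of
conjugate-heat-kernel measures whose `W₁`-distance is monotone going backwards in time. -/
theorem Pstar_symmetric_containment {M S : Type*} (I : Set ℝ) (ν : M → ℝ → ℝ → S)
    (dW : ℝ → S → S → ℝ) (δ : M → S)
    (htri : ∀ s ∈ I, ∀ a b c : S, dW s a c ≤ dW s a b + dW s b c)
    (hsymm : ∀ s ∈ I, ∀ a b : S, dW s a b = dW s b a)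
    (hmono : ∀ (x₁ : M) (t₁ : ℝ) (x₂ : M) (t₂ : ℝ), t₁ ∈ I → t₂ ∈ I →
      ∀ s₁ ∈ I, ∀ s₂ ∈ I, s₁ ≤ s₂ → s₂ ≤ t₁ → s₂ ≤ t₂ →
        dW s₁ (ν x₁ t₁ s₁) (ν x₂ t₂ s₁) ≤ dW s₂ (ν x₁ t₁ s₂) (ν x₂ t₂ s₂))
    (hdelta : ∀ x t, t ∈ I → ν x t t = δ x)
    (x₁ x₂ : M) (t₁ t₂ A Tm Tp : ℝ)
    (hA : 0 ≤ A) (hTm : 0 ≤ Tm) (hTp : 0 ≤ Tp)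
    (ht₂ : t₂ ∈ I) (hI₁ : t₂ - Tm ∈ I) (hI₂ : t₁ - (Tm + Tp) ∈ I)
    (hmem : (x₁, t₁) ∈ Pstar I ν dW x₂ t₂ A Tm Tp) :
    (x₂, t₂) ∈ Pstar I ν dW x₁ t₁ A (Tm + Tp) Tm ∧
      Pstar I ν dW x₂ t₂ A Tm Tp ⊆ Pstar I ν dW x₁ t₁ (2 * A) (Tm + Tp) (Tm + Tp) :=
  Pstar_symmetric_containment_general I ν dW htri hsymm hmono x₁ x₂ t₁ t₂ A Tm Tp hTm ht₂ hI₁ hI₂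
    hmem
end
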